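/- Let d be a positive even integer. Then in the shuffle algebra T(ℝ^d): det_⧢(W_d) = det_⧢(Anti(W_d)), where Anti(W_d) := (1/2)(W_d − W_dᵀ) is the skew-symmetric d×d matrix with (i,j) entry (1/2)(ij − ji). -/

import Mathlib

open scoped BigOperators

namespace ShufflePaper

variable {α : Type*}

/-- All shuffles (interleavings) of two words, with multiplicity. -/
def shuffles : List α → List α → Multiset (List α)
  | [], ys => {ys}
  | x :: xs, [] => {x :: xs}
  | x :: xs, y :: ys =>
      ((shuffles xs (y :: ys)).map (x :: ·)) + ((shuffles (x :: xs) ys).map (y :: ·))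
  termination_by l₁ l₂ => l₁.length + l₂.length

/-- The element of the shuffle algebra corresponding to a multiset of words. -/
noncomputable def ofMS (m : Multiset (List α)) : List α →₀ ℝ :=
  (m.map fun l => Finsupp.single l (1 : ℝ)).sum

/-- The shuffle product on the shuffle algebra `T(ℝ^d)` (bilinear extension). -/
noncomputable def sh (x y : List α →₀ ℝ) : List α →₀ ℝ :=
  x.sum fun v a => y.sum fun w b => (a * b) • ofMS (shuffles v w)

/-- Iterated shuffle product of a list of elements (empty word is the unit). -/
noncomputable def shProd : List (List α →₀ ℝ) → (List α →₀ ℝ)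
  | [] => Finsupp.single [] 1
  | x :: xs => sh x (shProd xs)

/-- Determinant in the commutative ring `(T(ℝ^d), ⧢)` via the Leibniz formula. -/
noncomputable def detSh {n : ℕ} (M : Fin n → Fin n → (List α →₀ ℝ)) : List α →₀ ℝ :=
  ∑ σ : Equiv.Perm (Fin n), (Equiv.Perm.sign σ : ℤ) •
    shProd ((List.finRange n).map fun i => M (σ i) i)

/-- The matrix `W_d` whose `(i,j)` entry is the two-letter word `ij`. -/
noncomputable def W (d : ℕ) : Fin d → Fin d → (List (Fin d) →₀ ℝ) :=
  fun i j => Finsupp.single [i, j] 1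

/-- `inv(t_{1,d}) = Σ_σ sign(σ) σ(1)⋯σ(d)`. -/
noncomputable def invT1 (d : ℕ) : List (Fin d) →₀ ℝ :=
  ∑ σ : Equiv.Perm (Fin d), (Equiv.Perm.sign σ : ℤ) •
    Finsupp.single ((List.finRange d).map σ) 1

/-- `inv(t_{2,d}) = Σ_{σ,τ} sign(σ)sign(τ) σ(1)τ(1)⋯σ(d)τ(d)`. -/
noncomputable def invT2 (d : ℕ) : List (Fin d) →₀ ℝ :=
  ∑ σ : Equiv.Perm (Fin d), ∑ τ : Equiv.Perm (Fin d),
    ((Equiv.Perm.sign σ : ℤ) * (Equiv.Perm.sign τ : ℤ)) •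
      Finsupp.single ((List.finRange d).flatMap fun i => [σ i, τ i]) 1

/- Right half-shuffle of two words: `u ≻ (v·i) = (u ⧢ v)·i`; zero if the
second word is empty. -/
open Classical in
noncomputable def hsW (u w : List α) : List α →₀ ℝ :=
  if h : w = [] then 0
  else ofMS ((shuffles u w.dropLast).map fun l => l ++ [w.getLast h])

/-- Right half-shuffle product (bilinear extension). -/
noncomputable def hs (x y : List α →₀ ℝ) : List α →₀ ℝ :=
  x.sum fun v a => y.sum fun w b => (a * b) • hsW v w

/-- Iterated right half-shuffle of a list of words, bracketed from the left. -/
noncomputable def hsList : List (List α) → (List α →₀ ℝ)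
  | [] => 0
  | w :: ws => ws.foldl (fun acc u => hs acc (Finsupp.single u 1)) (Finsupp.single w 1)

/-- Action of `σ ∈ S_n` on the span of words, permuting letter positions of
words of length `n` (letter in position `σ(k)` of `σ·w` is `w_k`); words of
other lengths are left untouched. -/
noncomputable def permAct {d : ℕ} (n : ℕ) (σ : Equiv.Perm (Fin n))
    (x : List (Fin d) →₀ ℝ) : List (Fin d) →₀ ℝ :=
  x.sum fun w a =>
    if h : w.length = n then
      Finsupp.single (List.ofFn fun p : Fin n => w.get (Fin.cast h.symm (σ⁻¹ p))) a
    else Finsupp.single w a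

/-- The subgroup `H ≤ S_{2d}` generated by the transpositions `(2i−1, 2i+1)` and
`(2i, 2i+2)`, `1 ≤ i ≤ d−1` (0-indexed: all swaps `(k, k+2)` with `k+2 < 2d`). -/
def Hgrp (d : ℕ) : Subgroup (Equiv.Perm (Fin (2 * d))) :=
  Subgroup.closure
    {g | ∃ k : ℕ, ∃ hk : k + 2 < 2 * d, g = Equiv.swap ⟨k, by omega⟩ ⟨k + 2, hk⟩}

/-- Pfaffian in the shuffle algebra, via the sum over permutations. -/
noncomputable def pfSh {n : ℕ} (A : Fin n → Fin n → (List α →₀ ℝ)) : List α →₀ ℝ :=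
  ((2 ^ (n / 2) * (n / 2).factorial : ℝ))⁻¹ •
    ∑ π : Equiv.Perm (Fin n), (Equiv.Perm.sign π : ℤ) •
      shProd ((List.finRange (n / 2)).map fun i : Fin (n / 2) =>
        A (π ⟨2 * (i : ℕ), by have := i.isLt; omega⟩)
          (π ⟨2 * (i : ℕ) + 1, by have := i.isLt; omega⟩))

/-- The matrix `Z_d` from de Bruijn's formula, odd case. -/
noncomputable def Z (d : ℕ) : Fin (d + 1) → Fin (d + 1) → (List (Fin d) →₀ ℝ) :=
  fun i j =>
    if hi : (i : ℕ) < d then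
      if hj : (j : ℕ) < d then
        Finsupp.single [⟨i, hi⟩, ⟨j, hj⟩] 1 - Finsupp.single [⟨j, hj⟩, ⟨i, hi⟩] 1
      else Finsupp.single [⟨i, hi⟩] 1
    else if hj : (j : ℕ) < d then -Finsupp.single [⟨j, hj⟩] 1
    else 0

end ShufflePaper

/-!
In the commutative ring `(T(ℝ^d), ⧢)` the letters satisfy `i ⧢ j = ij + ji`, so
`W_d = Anti(W_d) + ½ e eᵀ` with `e = (1, …, d)ᵀ`. A symmetric rank-one perturbation
`c • u uᵀ` of a skew-symmetric matrix `A` of even size leaves the determinant unchanged: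
bordering `A + c • u uᵀ` by one row and column writes its determinant as
`det A + c · det [[0, uᵀ], [-u, A]]`, and the last matrix is skew-symmetric of odd size,
so its determinant is its own negative, hence zero.
-/

namespace Matrix

variable {n R : Type*} [Fintype n] [DecidableEq n] [CommRing R] [IsAddTorsionFree R]

theorem det_eq_zero_of_transpose_eq_neg {A : Matrix n n R} (hA : Aᵀ = -A)
    (hn : Odd (Fintype.card n)) : A.det = 0 :=
  self_eq_neg.mp <| calc
    A.det = Aᵀ.det := (det_transpose A).symm
    _ = -A.det := by rw [hA, det_neg, hn.neg_one_pow, neg_one_mul]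

theorem det_add_smul_vecMulVec_self_of_transpose_eq_neg {A : Matrix n n R} (hA : Aᵀ = -A)
    (hn : Even (Fintype.card n)) (c : R) (u : n → R) :
    (A + c • vecMulVec u u).det = A.det := by
  set S : Matrix (Unit ⊕ n) (Unit ⊕ n) R :=
    fromBlocks 0 (replicateRow Unit u) (replicateCol Unit (-u)) A with hS_def
  have hS_skew : Sᵀ = -S := by
    rw [hS_def, fromBlocks_transpose, fromBlocks_neg, hA]
    congr 1 <;> ext <;> simp
  have hS_det : S.det = 0 :=
    det_eq_zero_of_transpose_eq_neg hS_skew (by simpa [add_comm] using hn.add_one)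
  have hschur : A + c • vecMulVec u u
      = A - replicateCol Unit (-u) * replicateRow Unit (c • u) := by
    ext i j
    simp [vecMulVec, mul_apply]
  have hborder : fromBlocks 1 (replicateRow Unit (c • u)) (replicateCol Unit (-u)) A
      = S.updateRow (Sum.inl ()) (Pi.single (Sum.inl ()) 1 + c • S (Sum.inl ())) := by
    ext (_ | i) (_ | j) <;> simp [S, updateRow_apply]
  have hfirst : S.updateRow (Sum.inl ()) (Pi.single (Sum.inl ()) 1)
      = fromBlocks 1 0 (replicateCol Unit (-u)) A := by
    ext (_ | i) (_ | j) <;> simp [S, updateRow_apply]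
  rw [hschur, ← det_fromBlocks_one₁₁, hborder, det_updateRow_add, det_updateRow_smul,
    updateRow_eq_self, hS_det, mul_zero, add_zero, hfirst, det_fromBlocks_zero₁₂, det_one,
    one_mul]

end Matrix

theorem Multiset.bind_singleton_self {β : Type*} (m : Multiset β) :
    (m.bind fun a => {a}) = m := by
  simpa using m.bind_singleton id

namespace ShufflePaper

variable {α : Type*}

theorem shuffles_nil_left (v : List α) : shuffles [] v = {v} := by simp [shuffles]

theorem shuffles_nil_right (v : List α) : shuffles v [] = {v} := by
  cases v <;> simp [shuffles]

theorem shuffles_singleton_singleton (a b : α) : shuffles [a] [b] = {[a, b], [b, a]} := by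
  simp [shuffles, shuffles_nil_left, shuffles_nil_right]

theorem shuffles_comm : ∀ u v : List α, shuffles u v = shuffles v u
  | [], v => by rw [shuffles_nil_left, shuffles_nil_right]
  | x :: xs, [] => by rw [shuffles_nil_left, shuffles_nil_right]
  | x :: xs, y :: ys => by
    simp only [shuffles]
    rw [shuffles_comm xs (y :: ys), shuffles_comm (x :: xs) ys, add_comm]
  termination_by u v => u.length + v.length

theorem shuffles_assoc : ∀ u v w : List α,
    (shuffles u v).bind (fun s => shuffles s w) = (shuffles v w).bind (fun t => shuffles u t)
  | [], v, w => by simp [shuffles_nil_left, Multiset.bind_singleton_self]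
  | x :: xs, [], w => by simp [shuffles_nil_left, shuffles_nil_right]
  | x :: xs, y :: ys, [] => by simp [shuffles_nil_right, Multiset.bind_singleton_self]
  | x :: xs, y :: ys, z :: zs => by
    have h₁ := shuffles_assoc xs (y :: ys) (z :: zs)
    have h₂ := shuffles_assoc (x :: xs) ys (z :: zs)
    have h₃ := shuffles_assoc (x :: xs) (y :: ys) zs
    simp only [shuffles, Multiset.add_bind, Multiset.bind_map, Multiset.bind_add] at *
    simp only [← Multiset.map_bind]
    rw [h₁, h₂, ← h₃]
    simp only [Multiset.map_add]
    abel
  termination_by u v w => u.length + v.length + w.length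

theorem ofMS_singleton (w : List α) : ofMS {w} = Finsupp.single w 1 := by
  simp [ofMS]

theorem ofMS_add (m m' : Multiset (List α)) : ofMS (m + m') = ofMS m + ofMS m' := by
  simp [ofMS]

theorem ofMS_pair (u v : List α) : ofMS {u, v} = Finsupp.single u 1 + Finsupp.single v 1 := by
  simp [ofMS]

theorem sh_single_single (u v : List α) (a b : ℝ) :
    sh (Finsupp.single u a) (Finsupp.single v b) = (a * b) • ofMS (shuffles u v) := by
  unfold sh
  rw [Finsupp.sum_single_index, Finsupp.sum_single_index] <;> simp

theorem zero_sh (y : List α →₀ ℝ) : sh 0 y = 0 := by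
  simp [sh]

theorem sh_zero (x : List α →₀ ℝ) : sh x 0 = 0 := by
  simp [sh]

theorem add_sh (x x' y : List α →₀ ℝ) : sh (x + x') y = sh x y + sh x' y := by
  unfold sh
  refine Finsupp.sum_add_index' (fun v => by simp) fun v a a' => ?_
  rw [← Finsupp.sum_add]
  exact Finsupp.sum_congr fun w _ => by rw [add_mul, add_smul]

theorem sh_add (x y y' : List α →₀ ℝ) : sh x (y + y') = sh x y + sh x y' := by
  unfold sh
  rw [← Finsupp.sum_add]
  exact Finsupp.sum_congr fun v _ =>
    Finsupp.sum_add_index' (fun w => by simp) (fun w b b' => by rw [mul_add, add_smul])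

theorem smul_sh (c : ℝ) (x y : List α →₀ ℝ) : sh (c • x) y = c • sh x y := by
  unfold sh
  rw [Finsupp.sum_smul_index' (fun v => by simp), Finsupp.smul_sum]
  refine Finsupp.sum_congr fun v _ => ?_
  rw [Finsupp.smul_sum]
  exact Finsupp.sum_congr fun w _ => by rw [smul_smul, smul_eq_mul, mul_assoc]

theorem sh_smul (c : ℝ) (x y : List α →₀ ℝ) : sh x (c • y) = c • sh x y := by
  unfold sh
  rw [Finsupp.smul_sum]
  refine Finsupp.sum_congr fun v _ => ?_
  rw [Finsupp.sum_smul_index' (fun w => by simp), Finsupp.smul_sum]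
  exact Finsupp.sum_congr fun w _ => by rw [smul_smul, smul_eq_mul, mul_left_comm]

theorem sh_comm (x y : List α →₀ ℝ) : sh x y = sh y x := by
  induction x using Finsupp.induction_linear with
  | zero => rw [zero_sh, sh_zero]
  | add f g hf hg => rw [add_sh, sh_add, hf, hg]
  | single u a =>
    induction y using Finsupp.induction_linear with
    | zero => rw [zero_sh, sh_zero]
    | add f g hf hg => rw [add_sh, sh_add, hf, hg]
    | single v b => rw [sh_single_single, sh_single_single, shuffles_comm, mul_comm]

theorem sh_ofMS_single (m : Multiset (List α)) (w : List α) :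
    sh (ofMS m) (Finsupp.single w 1) = ofMS (m.bind fun s => shuffles s w) := by
  induction m using Multiset.induction_on with
  | empty => simp [ofMS, zero_sh]
  | cons s m ih =>
    rw [← Multiset.singleton_add, Multiset.add_bind, ofMS_add, add_sh, ih, ofMS_add,
      ofMS_singleton, sh_single_single, Multiset.singleton_bind, one_mul, one_smul]

theorem single_sh_ofMS (u : List α) (m : Multiset (List α)) :
    sh (Finsupp.single u 1) (ofMS m) = ofMS (m.bind fun t => shuffles u t) := by
  rw [sh_comm, sh_ofMS_single]
  simp only [shuffles_comm]

theorem sh_assoc (x y z : List α →₀ ℝ) : sh (sh x y) z = sh x (sh y z) := by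
  induction x using Finsupp.induction_linear with
  | zero => simp only [zero_sh]
  | add f g hf hg => simp only [add_sh, hf, hg]
  | single u a =>
    induction y using Finsupp.induction_linear with
    | zero => simp only [zero_sh, sh_zero]
    | add f g hf hg => simp only [add_sh, sh_add, hf, hg]
    | single v b =>
      induction z using Finsupp.induction_linear with
      | zero => simp only [sh_zero]
      | add f g hf hg => simp only [sh_add, hf, hg]
      | single w c =>
        simp only [← Finsupp.smul_single_one _ a, ← Finsupp.smul_single_one _ b,
          ← Finsupp.smul_single_one _ c, smul_sh, sh_smul, sh_single_single, one_mul,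
          one_smul, sh_ofMS_single, single_sh_ofMS, shuffles_assoc]

theorem scalar_sh (c : ℝ) (y : List α →₀ ℝ) : sh (Finsupp.single [] c) y = c • y := by
  induction y using Finsupp.induction_linear with
  | zero => rw [sh_zero, smul_zero]
  | add f g hf hg => rw [sh_add, hf, hg, smul_add]
  | single v b => simp [sh_single_single, shuffles_nil_left, ofMS_singleton]

def ShuffleAlgebra (α : Type*) := List α →₀ ℝ

namespace ShuffleAlgebra

noncomputable instance : AddCommGroup (ShuffleAlgebra α) :=
  inferInstanceAs (AddCommGroup (List α →₀ ℝ))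

noncomputable instance : Module ℝ (ShuffleAlgebra α) :=
  inferInstanceAs (Module ℝ (List α →₀ ℝ))

instance : IsAddTorsionFree (ShuffleAlgebra α) :=
  inferInstanceAs (IsAddTorsionFree (List α →₀ ℝ))

noncomputable instance : CommRing (ShuffleAlgebra α) where
  mul := sh
  one := Finsupp.single [] 1
  mul_assoc := sh_assoc
  one_mul y := (scalar_sh 1 y).trans (one_smul ℝ y)
  mul_one x := (sh_comm x _).trans ((scalar_sh 1 x).trans (one_smul ℝ x))
  left_distrib := sh_add
  right_distrib := add_sh
  zero_mul := zero_sh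
  mul_zero := sh_zero
  mul_comm := sh_comm

end ShuffleAlgebra

noncomputable def toShuffleAlgebra : (List α →₀ ℝ) ≃ₗ[ℝ] ShuffleAlgebra α :=
  LinearEquiv.refl ℝ _

theorem toShuffleAlgebra_sh (x y : List α →₀ ℝ) :
    toShuffleAlgebra (sh x y) = toShuffleAlgebra x * toShuffleAlgebra y := rfl

theorem toShuffleAlgebra_shProd (l : List (List α →₀ ℝ)) :
    toShuffleAlgebra (shProd l) = (l.map toShuffleAlgebra).prod := by
  induction l with
  | nil => rfl
  | cons x xs ih => rw [List.map_cons, List.prod_cons, ← ih]; rfl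

theorem toShuffleAlgebra_detSh {n : ℕ} (M : Fin n → Fin n → (List α →₀ ℝ)) :
    toShuffleAlgebra (detSh M) = (Matrix.of fun i j => toShuffleAlgebra (M i j)).det := by
  simp only [detSh, Matrix.det_apply, map_sum, Units.smul_def, map_zsmul,
    toShuffleAlgebra_shProd, Fin.prod_univ_def, List.map_map]
  rfl

open Matrix in
theorem det_W_eq_det_antisym_part_general (d : ℕ) (hde : Even d) :
    detSh (W d) =
      detSh (fun i j : Fin d =>
        ((1 : ℝ) / 2) •
          (Finsupp.single [i, j] (1 : ℝ) - Finsupp.single [j, i] 1)) := by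
  set A : Matrix (Fin d) (Fin d) (ShuffleAlgebra (Fin d)) := of fun i j =>
    toShuffleAlgebra
      (((1 : ℝ) / 2) • (Finsupp.single [i, j] (1 : ℝ) - Finsupp.single [j, i] 1))
  set e : Fin d → ShuffleAlgebra (Fin d) := fun i => toShuffleAlgebra (Finsupp.single [i] 1)
  have hA : Aᵀ = -A := by
    ext i j
    simp only [A, transpose_apply, of_apply, Matrix.neg_apply, ← map_neg]
    congr 1
    module
  have hW : of (fun i j => toShuffleAlgebra (W d i j))
      = A + toShuffleAlgebra (Finsupp.single [] ((1 : ℝ) / 2) : List (Fin d) →₀ ℝ) •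
          vecMulVec e e := by
    ext i j
    simp only [A, e, W, Matrix.add_apply, Matrix.smul_apply, vecMulVec_apply, of_apply,
      smul_eq_mul, ← toShuffleAlgebra_sh, ← map_add, sh_single_single, scalar_sh]
    congr 1
    rw [shuffles_singleton_singleton, ofMS_pair]
    module
  apply toShuffleAlgebra.injective
  rw [toShuffleAlgebra_detSh, toShuffleAlgebra_detSh, hW,
    det_add_smul_vecMulVec_self_of_transpose_eq_neg hA (by simpa using hde)]

/-- for even `d`, `det_⧢(W_d) = det_⧢(Anti(W_d))`. -/
theorem det_W_eq_det_antisym_part (d : ℕ) (hd : 0 < d) (hde : Even d) :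
    detSh (W d) =
      detSh (fun i j : Fin d =>
        ((1 : ℝ) / 2) •
          (Finsupp.single [i, j] (1 : ℝ) - Finsupp.single [j, i] 1)) :=
  det_W_eq_det_antisym_part_general d hde

end ShufflePaper
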